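/- In ℤ[i]/5ℤ[i], the element 2 + 2i is not expressible as a sum of at most 3 elements of norm 1; i.e., the Cayley graph G_5 has diameter at least 4. -/

import Mathlib

/-- The ring `ℤ[i]/5ℤ[i]`, modeled as pairs `(a, b)` over `ℤ/5ℤ` representing `a + bi`. -/
abbrev R5 := ZMod 5 × ZMod 5

/-- The norm `N(a+bi) = a² + b²`. -/
def Gnorm (β : R5) : ZMod 5 := β.1 ^ 2 + β.2 ^ 2

/-!
The only elements of norm one are the units `±1, ±i`, since the squares mod 5 are `0, 1, 4`.
Each of them has Lee weight `|a| + |b| = 1` (with `|·|` the least absolute residue), the Lee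
weight is subadditive, and `2 + 2i` has Lee weight `4`.
-/

namespace ZMod

variable {n : ℕ}

/-- The Lee weight of `(a, b)`: the word length of `a + bi` with respect to the steps `±1, ±i`. -/
def leeWeight (β : ZMod n × ZMod n) : ℕ :=
  β.1.valMinAbs.natAbs + β.2.valMinAbs.natAbs

lemma natAbs_valMinAbs_add_le_add (a b : ZMod n) :
    (a + b).valMinAbs.natAbs ≤ a.valMinAbs.natAbs + b.valMinAbs.natAbs :=
  (natAbs_valMinAbs_add_le a b).trans (Int.natAbs_add_le _ _)

@[simp]
lemma leeWeight_zero : leeWeight (0 : ZMod n × ZMod n) = 0 := by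
  simp [leeWeight]

lemma leeWeight_add_le (β γ : ZMod n × ZMod n) :
    leeWeight (β + γ) ≤ leeWeight β + leeWeight γ := by
  have h₁ := natAbs_valMinAbs_add_le_add β.1 γ.1
  have h₂ := natAbs_valMinAbs_add_le_add β.2 γ.2
  simp only [leeWeight, Prod.fst_add, Prod.snd_add]
  omega

lemma leeWeight_sum_le {ι : Type*} (s : Finset ι) (f : ι → ZMod n × ZMod n) :
    leeWeight (∑ i ∈ s, f i) ≤ ∑ i ∈ s, leeWeight (f i) :=
  Finset.le_sum_of_subadditive _ leeWeight_zero.le leeWeight_add_le s f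

end ZMod

open ZMod

lemma leeWeight_eq_one_of_Gnorm_eq_one : ∀ β : R5, Gnorm β = 1 → leeWeight β = 1 := by
  decide

/-- In `ℤ[i]/5ℤ[i]`, the element `2 + 2i` is not a sum of at most three elements of
norm one; i.e. the Cayley graph `G_5` has diameter at least `4`. -/
theorem G5_diameter_at_least_four :
    ¬ ∃ k ≤ 3, ∃ f : Fin k → R5, (∀ j, Gnorm (f j) = 1) ∧
      ((2 : ZMod 5), (2 : ZMod 5)) = ∑ j, f j := by
  rintro ⟨k, hk, f, hf, hsum⟩
  have hweight : leeWeight ((2 : ZMod 5), (2 : ZMod 5)) = 4 := by decide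
  have hbound : leeWeight (∑ j, f j) ≤ k := by
    calc leeWeight (∑ j, f j) ≤ ∑ j, leeWeight (f j) := leeWeight_sum_le _ f
      _ = k := by simp [fun j => leeWeight_eq_one_of_Gnorm_eq_one (f j) (hf j)]
  rw [← hsum, hweight] at hbound
  omega
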